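/- Let p > 4 and let δ ∈ (0, 1/2). Set θ = φ = (1+2δ)/p, and define u(n) = n^{-2/p}(log n)^{-θ} for n ≥ 3 (u(n)=0 for n ≤ 2), μ(n) = n for n ≥ 3 (μ(n)=1 for n ≤ 2), a(n) = (log n)^δ for n ≥ 3 (a(n)=1 for n ≤ 2). Then ∑_n μ(n) a(n) u(n)^p < ∞, while ∑_{n≥3} μ(n) · u(n)^{p-2} · u(n)² · log(u(n)²) = -∞. -/

import Mathlib

/-!
For `n ≥ 3` write `L = log n`. Then `μ a u ^ p = 1 / (n L ^ (1 + δ))`, a convergent Bertrand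
series since `δ > 0`. The coupling term is `n u ^ p log u²`, and
`log u² = -(4/p) L - 2θ log L ≤ -(4/p) L`, so it is at most `-(4/p) / (n L ^ (2δ))`, whose series
diverges since `2δ ≤ 1`. Cauchy condensation turns both Bertrand series into `p`-series.
-/

open Real Filter

lemma Real.summable_inv_nat_mul_log_rpow_iff {s : ℝ} (hs : 0 ≤ s) :
    Summable (fun n : ℕ => ((n : ℝ) * log n ^ s)⁻¹) ↔ 1 < s := by
  have h_nonneg : ∀ n : ℕ, 0 ≤ ((n : ℝ) * log n ^ s)⁻¹ := fun n =>
    inv_nonneg.2 (mul_nonneg n.cast_nonneg (rpow_nonneg (log_natCast_nonneg n) s))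
  have h_antitone : ∀ᶠ n : ℕ in atTop,
      ((n + 1 : ℕ) * log (n + 1 : ℕ) ^ s : ℝ)⁻¹ ≤ ((n : ℝ) * log n ^ s)⁻¹ := by
    filter_upwards [eventually_ge_atTop 2] with n hn
    have hn' : (2 : ℝ) ≤ n := by exact_mod_cast hn
    have hlog : 0 < log n := log_pos (by linarith)
    apply inv_anti₀ (mul_pos (by linarith) (rpow_pos_of_pos hlog s))
    push_cast
    gcongr <;> linarith
  -- Cauchy condensation: `2 ^ k` times the `2 ^ k`-th term is `(k * log 2) ^ (-s)`.
  have h_condensed : (fun k : ℕ => (2 : ℝ) ^ k * (((2 ^ k : ℕ) : ℝ) * log (2 ^ k : ℕ) ^ s)⁻¹)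
      = fun k : ℕ => (log 2 ^ s)⁻¹ * ((k : ℝ) ^ s)⁻¹ := by
    ext k
    have h2k : (2 : ℝ) ^ k ≠ 0 := by positivity
    push_cast
    rw [log_pow, mul_comm (k : ℝ), mul_rpow (log_nonneg one_le_two) k.cast_nonneg]
    field_simp
  rw [← summable_condensed_iff_of_eventually_nonneg (Eventually.of_forall h_nonneg) h_antitone,
    h_condensed, summable_mul_left_iff (inv_ne_zero (rpow_pos_of_pos (log_pos one_lt_two) s).ne'),
    summable_nat_rpow_inv]

lemma one_le_log_natCast {n : ℕ} (hn : 3 ≤ n) : 1 ≤ log n := by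
  have h3 : (3 : ℝ) ≤ n := by exact_mod_cast hn
  rw [le_log_iff_exp_le (by positivity)]
  linarith [exp_one_lt_d9]

/-- The sequence `u` of the counterexample, on `n ≥ 3`. -/
noncomputable def decayProfile (p θ x : ℝ) : ℝ := x ^ (-(2 / p)) * log x ^ (-θ)

section DecayProfile

variable {p δ x : ℝ}

lemma decayProfile_pos {θ : ℝ} (hx : 0 < x) (hL : 0 < log x) : 0 < decayProfile p θ x :=
  mul_pos (rpow_pos_of_pos hx _) (rpow_pos_of_pos hL _)

lemma decayProfile_rpow (hp : p ≠ 0) (hx : 0 < x) (hL : 0 < log x) :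
    decayProfile p ((1 + 2 * δ) / p) x ^ p = (x ^ 2 * log x ^ (1 + 2 * δ))⁻¹ := by
  rw [decayProfile, mul_rpow (rpow_nonneg hx.le _) (rpow_nonneg hL.le _), ← rpow_mul hx.le,
    ← rpow_mul hL.le, neg_mul, neg_mul, div_mul_cancel₀ _ hp, div_mul_cancel₀ _ hp,
    rpow_neg hx.le, rpow_neg hL.le, rpow_two, mul_inv]

lemma log_decayProfile_sq_le {θ : ℝ} (hθ : 0 ≤ θ) (hx : 0 < x) (hL : 1 ≤ log x) :
    log (decayProfile p θ x ^ 2) ≤ -(4 / p) * log x := by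
  have hL0 : 0 < log x := by linarith
  rw [log_pow, decayProfile, log_mul (rpow_pos_of_pos hx _).ne' (rpow_pos_of_pos hL0 _).ne',
    log_rpow hx, log_rpow hL0]
  have h4 : -(4 / p) * log x = 2 * (-(2 / p) * log x) := by ring
  have := mul_nonneg hθ (log_nonneg hL)
  push_cast
  linarith

lemma mul_log_rpow_mul_decayProfile_rpow (hp : p ≠ 0) (hx : 0 < x) (hL : 0 < log x) :
    x * log x ^ δ * decayProfile p ((1 + 2 * δ) / p) x ^ p = (x * log x ^ (1 + δ))⁻¹ := by
  rw [decayProfile_rpow hp hx hL, show 1 + 2 * δ = δ + (1 + δ) by ring, rpow_add hL]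
  have := (rpow_pos_of_pos hL δ).ne'
  field_simp

lemma mul_decayProfile_log_coupling_le (hp : 0 < p) (hδ : 0 ≤ 1 + 2 * δ) (hx : 0 < x)
    (hL : 1 ≤ log x) :
    x * decayProfile p ((1 + 2 * δ) / p) x ^ (p - 2) * decayProfile p ((1 + 2 * δ) / p) x ^ 2 *
        log (decayProfile p ((1 + 2 * δ) / p) x ^ 2)
      ≤ -(4 / p) * (x * log x ^ (2 * δ))⁻¹ := by
  have hL0 : 0 < log x := by linarith
  set U := decayProfile p ((1 + 2 * δ) / p) x
  have hU : 0 < U := decayProfile_pos hx hL0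
  have hUp : U ^ (p - 2) * U ^ 2 = (x ^ 2 * log x ^ (1 + 2 * δ))⁻¹ := by
    rw [rpow_sub hU, rpow_two, div_mul_cancel₀ _ (by positivity), decayProfile_rpow hp.ne' hx hL0]
  calc x * U ^ (p - 2) * U ^ 2 * log (U ^ 2)
      = x * (x ^ 2 * log x ^ (1 + 2 * δ))⁻¹ * log (U ^ 2) := by rw [mul_assoc x, hUp]
    _ ≤ x * (x ^ 2 * log x ^ (1 + 2 * δ))⁻¹ * (-(4 / p) * log x) := by
        gcongr
        exact log_decayProfile_sq_le (div_nonneg hδ hp.le) hx hL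
    _ = -(4 / p) * (x * log x ^ (2 * δ))⁻¹ := by
        rw [rpow_add hL0, rpow_one]
        have := (rpow_pos_of_pos hL0 (2 * δ)).ne'
        field_simp

end DecayProfile

theorem stmt_12 (p δ θ : ℝ) (hp : 4 < p) (hδ : δ ∈ Set.Ioo (0 : ℝ) (1 / 2))
    (hθ : θ = (1 + 2 * δ) / p)
    (u μ a : ℕ → ℝ)
    (hu : ∀ n : ℕ, u n = if 3 ≤ n then (n : ℝ) ^ (-(2 / p)) * Real.log n ^ (-θ) else 0)
    (hμ : ∀ n : ℕ, μ n = if 3 ≤ n then (n : ℝ) else 1)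
    (ha : ∀ n : ℕ, a n = if 3 ≤ n then Real.log n ^ δ else 1) :
    Summable (fun n : ℕ => μ n * a n * u n ^ p) ∧
      Filter.Tendsto
        (fun N : ℕ => ∑ n ∈ Finset.range N,
          μ (n + 3) * u (n + 3) ^ (p - 2) * u (n + 3) ^ 2 * Real.log (u (n + 3) ^ 2))
        Filter.atTop Filter.atBot := by
  obtain ⟨hδ0, hδ1⟩ := hδ
  subst hθ
  have hp0 : 0 < p := by linarith
  have hu' : ∀ n : ℕ, 3 ≤ n → u n = decayProfile p ((1 + 2 * δ) / p) n := fun n hn => by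
    rw [hu, if_pos hn, decayProfile]
  constructor
  · refine (summable_congr_atTop ?_).2
      ((summable_inv_nat_mul_log_rpow_iff (s := 1 + δ) (by linarith)).2 (by linarith))
    filter_upwards [eventually_ge_atTop 3] with n hn
    rw [hμ, ha, if_pos hn, if_pos hn, hu' n hn, mul_log_rpow_mul_decayProfile_rpow hp0.ne'
      (by positivity) (by linarith [one_le_log_natCast hn])]
  · have h_div : Tendsto (fun N => ∑ n ∈ Finset.range N,
        (((n + 3 : ℕ) : ℝ) * log (n + 3 : ℕ) ^ (2 * δ))⁻¹) atTop atTop := by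
      rw [← not_summable_iff_tendsto_nat_atTop_of_nonneg (fun n => by positivity),
        summable_nat_add_iff (f := fun n : ℕ => ((n : ℝ) * log n ^ (2 * δ))⁻¹),
        summable_inv_nat_mul_log_rpow_iff (by linarith)]
      linarith
    refine tendsto_atBot_mono (fun N => ?_)
      (h_div.const_mul_atTop_of_neg (neg_lt_zero.2 (div_pos four_pos hp0)))
    rw [Finset.mul_sum]
    refine Finset.sum_le_sum fun n _ => ?_
    rw [hμ, if_pos (by omega), hu' (n + 3) (by omega)]
    exact mul_decayProfile_log_coupling_le hp0 (by linarith) (by positivity)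
      (one_le_log_natCast (by omega))
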